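/- For every natural number n ≥ 2, Euclidean space ℝⁿ satisfies condition (C) (equivalently, has connected Higson corona), while ℝ does not satisfy condition (C). -/

import Mathlib

open Bornology

def Bornologous {X Y : Type*} [PseudoMetricSpace X] [PseudoMetricSpace Y] (f : X → Y) : Prop :=
  ∀ R : ℝ, 0 < R → ∃ S : ℝ, 0 < S ∧ ∀ x x' : X, dist x x' ≤ R → dist (f x) (f x') ≤ S

def ProperMap {X Y : Type*} [PseudoMetricSpace X] [PseudoMetricSpace Y] (f : X → Y) : Prop :=
  ∀ B : Set Y, IsBounded B → IsBounded (f ⁻¹' B)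

def IsCoarse {X Y : Type*} [PseudoMetricSpace X] [PseudoMetricSpace Y] (f : X → Y) : Prop :=
  Bornologous f ∧ ProperMap f

def Close {X Y : Type*} [PseudoMetricSpace Y] (f g : X → Y) : Prop :=
  ∃ R : ℝ, 0 < R ∧ ∀ x : X, dist (f x) (g x) ≤ R

def coprodDist {X Y : Type*} [MetricSpace X] [MetricSpace Y] (x₀ : X) (y₀ : Y) :
    X ⊕ Y → X ⊕ Y → ℝ
  | Sum.inl a, Sum.inl b => dist a b
  | Sum.inl a, Sum.inr b => dist a x₀ + 1 + dist y₀ b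
  | Sum.inr a, Sum.inl b => dist b x₀ + 1 + dist y₀ a
  | Sum.inr a, Sum.inr b => dist a b

noncomputable def coprodMetric {X Y : Type*} [MetricSpace X] [MetricSpace Y]
    (x₀ : X) (y₀ : Y) : MetricSpace (X ⊕ Y) where
  dist := coprodDist x₀ y₀
  dist_self := by rintro (a | a) <;> simp [coprodDist]
  dist_comm := fun p q => by
    match p, q with
    | Sum.inl a, Sum.inl b => exact dist_comm a b
    | Sum.inl a, Sum.inr b => rfl
    | Sum.inr a, Sum.inl b => rfl
    | Sum.inr a, Sum.inr b => exact dist_comm a b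
  dist_triangle := fun p q r => by
    match p, q, r with
    | Sum.inl a, Sum.inl b, Sum.inl c => exact dist_triangle a b c
    | Sum.inl a, Sum.inl b, Sum.inr c =>
      show dist a x₀ + 1 + dist y₀ c ≤ dist a b + (dist b x₀ + 1 + dist y₀ c)
      have := dist_triangle a b x₀; linarith
    | Sum.inl a, Sum.inr b, Sum.inl c =>
      show dist a c ≤ (dist a x₀ + 1 + dist y₀ b) + (dist c x₀ + 1 + dist y₀ b)
      have h1 := dist_triangle a x₀ c
      have h2 : dist x₀ c = dist c x₀ := dist_comm _ _
      have h3 := dist_nonneg (x := y₀) (y := b)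
      linarith
    | Sum.inl a, Sum.inr b, Sum.inr c =>
      show dist a x₀ + 1 + dist y₀ c ≤ (dist a x₀ + 1 + dist y₀ b) + dist b c
      have := dist_triangle y₀ b c; linarith
    | Sum.inr a, Sum.inl b, Sum.inl c =>
      show dist c x₀ + 1 + dist y₀ a ≤ (dist b x₀ + 1 + dist y₀ a) + dist b c
      have h1 := dist_triangle c b x₀
      have h2 : dist c b = dist b c := dist_comm _ _
      linarith
    | Sum.inr a, Sum.inl b, Sum.inr c =>
      show dist a c ≤ (dist b x₀ + 1 + dist y₀ a) + (dist b x₀ + 1 + dist y₀ c)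
      have h1 := dist_triangle a y₀ c
      have h2 : dist a y₀ = dist y₀ a := dist_comm _ _
      have h3 := dist_nonneg (x := b) (y := x₀)
      linarith
    | Sum.inr a, Sum.inr b, Sum.inl c =>
      show dist c x₀ + 1 + dist y₀ a ≤ dist a b + (dist c x₀ + 1 + dist y₀ b)
      have h1 := dist_triangle y₀ b a
      have h2 : dist b a = dist a b := dist_comm _ _
      linarith
    | Sum.inr a, Sum.inr b, Sum.inr c => exact dist_triangle a b c
  eq_of_dist_eq_zero := fun {p q} h => by
    match p, q, h with
    | Sum.inl a, Sum.inl b, h => exact congrArg Sum.inl (eq_of_dist_eq_zero h)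
    | Sum.inl a, Sum.inr b, h =>
      exfalso
      have h1 := dist_nonneg (x := a) (y := x₀)
      have h2 := dist_nonneg (x := y₀) (y := b)
      have h' : dist a x₀ + 1 + dist y₀ b = 0 := h
      linarith
    | Sum.inr a, Sum.inl b, h =>
      exfalso
      have h1 := dist_nonneg (x := b) (y := x₀)
      have h2 := dist_nonneg (x := y₀) (y := a)
      have h' : dist b x₀ + 1 + dist y₀ a = 0 := h
      linarith
    | Sum.inr a, Sum.inr b, h => exact congrArg Sum.inr (eq_of_dist_eq_zero h)

/-- Condition (C): every coarse map into a coarse coproduct factors, up to closeness,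
through one of the coproduct injections. -/
def CondC (X : Type u) [MetricSpace X] : Prop :=
  ∀ (Y Z : Type u) [MetricSpace Y] [MetricSpace Z] (y₀ : Y) (z₀ : Z) (f : X → Y ⊕ Z),
    letI := coprodMetric y₀ z₀
    IsCoarse f →
      (∃ g : X → Y, IsCoarse g ∧ Close (Sum.inl ∘ g) f) ∨
      (∃ h : X → Z, IsCoarse h ∧ Close (Sum.inr ∘ h) f)

open Metric

/-! A coarse map `f : X → Y + Z` can only jump between the two summands near the base point:
if `dist x x' ≤ 1` but `f x` and `f x'` lie in different summands, then `f x` is within the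
bornologous bound `S` of `inl y₀`, and by properness such `x` form a bounded set. Hence the
summand containing `f x` is locally constant off a bounded set. If complements of large balls
are connected, as in any real normed space of dimension at least `2`, the map eventually stays
in one summand and is close to a coarse map into it. On `ℝ` the two half-lines can be sent to
different summands. -/

section Coarse

variable {X V W : Type*} [PseudoMetricSpace X] [PseudoMetricSpace V] [PseudoMetricSpace W]

theorem Bornologous.isBounded_image {f : X → W} (hf : Bornologous f) {K : Set X}
    (hK : IsBounded K) : IsBounded (f '' K) := by
  obtain ⟨C, hC⟩ := isBounded_iff.1 hK
  obtain ⟨S, -, hS⟩ := hf (max C 1) (by positivity)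
  refine isBounded_iff.2 ⟨S, ?_⟩
  rintro - ⟨x, hx, rfl⟩ - ⟨x', hx', rfl⟩
  exact hS x x' ((hC hx hx').trans (le_max_left _ _))

theorem IsCoarse.of_close {f g : X → W} (hf : IsCoarse f) (hgf : Close g f) : IsCoarse g := by
  obtain ⟨hb, hp⟩ := hf
  obtain ⟨R, hR, hgf⟩ := hgf
  refine ⟨fun r hr => ?_, fun B hB => ?_⟩
  · obtain ⟨S, hS, hfS⟩ := hb r hr
    refine ⟨R + S + R, by positivity, fun x x' hxx' => ?_⟩
    calc dist (g x) (g x') ≤ dist (g x) (f x) + dist (f x) (f x') + dist (f x') (g x') :=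
          dist_triangle4 _ _ _ _
      _ ≤ R + S + R := by
          gcongr
          · exact hgf x
          · exact hfS x x' hxx'
          · rw [dist_comm]; exact hgf x'
  · refine (hp _ (hB.cthickening (δ := R))).subset fun x hx => ?_
    exact mem_cthickening_of_dist_le (f x) (g x) R B hx (by rw [dist_comm]; exact hgf x)

theorem IsCoarse.of_isometry_comp {ι : V → W} (hι : Isometry ι) {g : X → V}
    (hg : IsCoarse (ι ∘ g)) : IsCoarse g := by
  obtain ⟨hb, hp⟩ := hg
  refine ⟨fun R hR => ?_, fun B hB => ?_⟩
  · obtain ⟨S, hS, hgS⟩ := hb R hR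
    exact ⟨S, hS, fun x x' hxx' => by simpa [hι.dist_eq] using hgS x x' hxx'⟩
  · exact (hp _ (hι.lipschitz.isBounded_image hB)).subset fun x hx => Set.mem_image_of_mem ι hx

theorem IsCoarse.of_dist_le_of_le_dist {f : X → W} (c : ℝ)
    (hle : ∀ x x', dist (f x) (f x') ≤ dist x x' + c)
    (hge : ∀ x x', dist x x' ≤ dist (f x) (f x')) : IsCoarse f := by
  refine ⟨fun R _ => ⟨max (R + c) 1, by positivity, fun x x' hxx' => ?_⟩, fun B hB => ?_⟩
  · exact (hle x x').trans (by linarith [le_max_left (R + c) 1])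
  · obtain ⟨C, hC⟩ := isBounded_iff.1 hB
    exact isBounded_iff.2 ⟨C, fun x hx x' hx' => (hge x x').trans (hC hx hx')⟩

theorem exists_isCoarse_close_of_mem_range [Nonempty V] {ι : V → W} (hι : Isometry ι)
    {f : X → W} (hf : IsCoarse f) {L : Set X} (hL : IsBounded L)
    (hfL : ∀ x ∉ L, f x ∈ Set.range ι) : ∃ g : X → V, IsCoarse g ∧ Close (ι ∘ g) f := by
  classical
  obtain ⟨C, hC, hfC⟩ :=
    (hf.1.isBounded_image hL).subset_closedBall_lt 0 (ι (Classical.arbitrary V))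
  have hclose : Close (ι ∘ Function.invFun ι ∘ f) f := by
    refine ⟨C, hC, fun x => ?_⟩
    by_cases hx : f x ∈ Set.range ι
    · simp [Function.invFun_eq hx, hC.le]
    · rw [Function.comp_apply, Function.comp_apply, Function.invFun_neg hx, dist_comm]
      exact hfC ⟨x, not_imp_comm.1 (hfL x) hx, rfl⟩
  exact ⟨_, (hf.of_close hclose).of_isometry_comp hι, hclose⟩

end Coarse

section Coprod

variable {Y Z : Type*} [MetricSpace Y] [MetricSpace Z] (y₀ : Y) (z₀ : Z)

theorem isometry_inl_coprodMetric :
    letI := coprodMetric y₀ z₀; Isometry (Sum.inl : Y → Y ⊕ Z) :=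
  letI := coprodMetric y₀ z₀; Isometry.of_dist_eq fun _ _ => rfl

theorem isometry_inr_coprodMetric :
    letI := coprodMetric y₀ z₀; Isometry (Sum.inr : Z → Y ⊕ Z) :=
  letI := coprodMetric y₀ z₀; Isometry.of_dist_eq fun _ _ => rfl

theorem coprodMetric_dist_inl_le_of_isLeft_ne : letI := coprodMetric y₀ z₀;
    ∀ p q : Y ⊕ Z, p.isLeft ≠ q.isLeft → dist p (Sum.inl y₀) ≤ dist p q := by
  rintro (a | b) (a' | b') h <;>
    simp only [Sum.isLeft_inl, Sum.isLeft_inr, ne_eq, not_true_eq_false] at h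
  · change dist a y₀ ≤ dist a y₀ + 1 + dist z₀ b'
    linarith [dist_nonneg (x := z₀) (y := b')]
  · change dist y₀ y₀ + 1 + dist z₀ b ≤ dist a' y₀ + 1 + dist z₀ b
    linarith [dist_nonneg (x := a') (y := y₀), dist_self y₀]

theorem exists_isBounded_forall_isLeft_eq {X : Type*} [PseudoMetricSpace X] (f : X → Y ⊕ Z) :
    letI := coprodMetric y₀ z₀
    IsCoarse f → ∃ K : Set X, IsBounded K ∧
      ∀ x ∉ K, ∀ x' ∈ closedBall x 1, (f x).isLeft = (f x').isLeft := by
  let _ := coprodMetric y₀ z₀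
  rintro ⟨hb, hp⟩
  obtain ⟨S, -, hS⟩ := hb 1 one_pos
  refine ⟨f ⁻¹' closedBall (Sum.inl y₀) S, hp _ isBounded_closedBall, fun x hx x' hx' => ?_⟩
  by_contra hne
  exact hx ((coprodMetric_dist_inl_le_of_isLeft_ne y₀ z₀ _ _ hne).trans
    (hS x x' (mem_closedBall'.1 hx')))

end Coprod

theorem CondC.of_forall_isPreconnected_compl {X : Type u} [MetricSpace X]
    (hX : ∀ K : Set X, IsBounded K → ∃ L, K ⊆ L ∧ IsBounded L ∧ IsPreconnected Lᶜ) :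
    CondC X := by
  intro Y Z _ _ y₀ z₀ f hf
  let _ := coprodMetric y₀ z₀
  have : Nonempty Y := ⟨y₀⟩
  have : Nonempty Z := ⟨z₀⟩
  obtain ⟨K, hK, hfK⟩ := exists_isBounded_forall_isLeft_eq y₀ z₀ f hf
  obtain ⟨L, hKL, hL, hLc⟩ := hX K hK
  have hcont : ContinuousOn (fun x => (f x).isLeft) Lᶜ := fun x hx =>
    (continuousAt_const.congr (Filter.mem_of_superset (closedBall_mem_nhds x one_pos)
      (hfK x fun hxK => hx (hKL hxK)))).continuousWithinAt
  by_cases hleft : ∀ x ∉ L, (f x).isLeft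
  · left
    exact exists_isCoarse_close_of_mem_range (isometry_inl_coprodMetric y₀ z₀) hf hL
      fun x hx => Set.range_inl ▸ hleft x hx
  · right
    push Not at hleft
    obtain ⟨x₀, hx₀, hfx₀⟩ := hleft
    refine exists_isCoarse_close_of_mem_range (isometry_inr_coprodMetric y₀ z₀) hf hL
      fun x hx => Set.range_inr ▸ Sum.not_isLeft.1 ?_
    rwa [hLc.constant hcont hx hx₀]

section NormedSpace

variable {E : Type u} [NormedAddCommGroup E] [NormedSpace ℝ E]

theorem isPreconnected_compl_closedBall (h : 1 < Module.rank ℝ E) (c : E) {r : ℝ}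
    (hr : 0 ≤ r) : IsPreconnected (closedBall c r)ᶜ := by
  have himage : (closedBall c r)ᶜ =
      (fun p : ℝ × E => c + p.1 • p.2) '' (Set.Ioi r ×ˢ sphere 0 1) := by
    ext x
    simp only [Set.mem_compl_iff, mem_closedBall, not_le, Set.mem_image, Set.mem_prod,
      Set.mem_Ioi, mem_sphere_zero_iff_norm, Prod.exists]
    constructor
    · intro hx
      have hpos : 0 < ‖x - c‖ := (hr.trans_lt hx).trans_eq (dist_eq_norm x c)
      refine ⟨‖x - c‖, ‖x - c‖⁻¹ • (x - c), ⟨by rwa [← dist_eq_norm], ?_⟩, ?_⟩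
      · rw [norm_smul, norm_inv, norm_norm, inv_mul_cancel₀ hpos.ne']
      · rw [smul_smul, mul_inv_cancel₀ hpos.ne', one_smul, add_sub_cancel]
    · rintro ⟨t, u, ⟨ht, hu⟩, rfl⟩
      rw [dist_eq_norm, add_sub_cancel_left, norm_smul, hu, mul_one, Real.norm_of_nonneg]
      exacts [ht, hr.trans ht.le]
  rw [himage]
  exact (isPreconnected_Ioi.prod (isPreconnected_sphere h 0 1)).image _ (by fun_prop)

theorem condC_of_one_lt_rank (h : 1 < Module.rank ℝ E) : CondC E :=
  CondC.of_forall_isPreconnected_compl fun _ hK =>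
    let ⟨r, hr, hKr⟩ := hK.subset_closedBall_lt 0 0
    ⟨closedBall 0 r, hKr, isBounded_closedBall, isPreconnected_compl_closedBall h 0 hr.le⟩

end NormedSpace

noncomputable def Real.splitAtZero (x : ℝ) : ℝ ⊕ ℝ :=
  if 0 ≤ x then Sum.inl x else Sum.inr x

theorem Real.dist_splitAtZero_mem_Icc (x x' : ℝ) :
    letI := coprodMetric (0 : ℝ) (0 : ℝ)
    dist (splitAtZero x) (splitAtZero x') ∈ Set.Icc (dist x x') (dist x x' + 1) := by
  change coprodDist (0 : ℝ) (0 : ℝ) _ _ ∈ _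
  unfold splitAtZero
  split_ifs <;>
    simp only [coprodDist, Real.dist_eq, Set.mem_Icc, sub_zero, zero_sub, abs_neg] <;> grind

theorem not_condC_real : ¬ CondC ℝ := by
  let _ := coprodMetric (0 : ℝ) (0 : ℝ)
  have hf : IsCoarse Real.splitAtZero := .of_dist_le_of_le_dist 1
    (fun x x' => (Real.dist_splitAtZero_mem_Icc x x').2)
    (fun x x' => (Real.dist_splitAtZero_mem_Icc x x').1)
  intro h
  rcases h ℝ ℝ 0 0 Real.splitAtZero hf with ⟨g, -, R, hR, hg⟩ | ⟨g, -, R, hR, hg⟩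
  · have hx := hg (-(R + 1))
    rw [Function.comp_apply, Real.splitAtZero, if_neg (by linarith)] at hx
    change dist (g _) 0 + 1 + dist 0 (-(R + 1)) ≤ R at hx
    rw [Real.dist_eq, Real.dist_eq] at hx
    grind
  · have hx := hg (R + 1)
    rw [Function.comp_apply, Real.splitAtZero, if_pos (by linarith)] at hx
    change dist (R + 1) 0 + 1 + dist 0 (g _) ≤ R at hx
    rw [Real.dist_eq, Real.dist_eq] at hx
    grind

/-- Euclidean space `ℝⁿ` satisfies condition (C) for every `n ≥ 2` (so has
connected Higson corona), but `ℝ` does not satisfy condition (C). -/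
theorem euclidean_condC_iff :
    (∀ n : ℕ, 2 ≤ n → CondC (EuclideanSpace ℝ (Fin n))) ∧ ¬ CondC ℝ :=
  ⟨fun n hn => condC_of_one_lt_rank (by
    rw [← Module.finrank_eq_rank, finrank_euclideanSpace_fin]
    exact_mod_cast hn), not_condC_real⟩
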